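/- Let E ⊆ [0,∞) be strongly porous on the right at 0 with 0 an accumulation point of E. Then the preordered set (Ĩ_E^d, ⪯) contains a universal element if and only if there exists c > 1 such that for every K > 1 there is t > 0 with the property: for every connected component (a,b) of the exterior of E, if a < t and b/a > c then b/a > K. -/

import Mathlib

open Filter Set Topology ENNReal

/-- λ(E,0,h): the supremum of lengths of open subintervals of (0,h) disjoint from E. -/
noncomputable def lambda0 (E : Set ℝ) (h : ℝ) : ℝ :=
  sSup {l : ℝ | ∃ a b : ℝ, 0 ≤ a ∧ a ≤ b ∧ b ≤ h ∧ Set.Ioo a b ∩ E = ∅ ∧ l = b - a}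

/-- p⁺(E,0): the right porosity of E at 0. -/
noncomputable def porosity (E : Set ℝ) : ℝ :=
  Filter.limsup (fun h => lambda0 E h / h) (nhdsWithin 0 (Set.Ioi 0))

/-- 0 is an accumulation point of E (E ⊆ [0,∞), relative topology of [0,∞)). -/
def AccZero (E : Set ℝ) : Prop := ∀ ε > 0, ∃ x ∈ E, 0 < x ∧ x < ε

/-- (a,b) is a connected component of the exterior of E in [0,∞):
an open interval in [0,∞) disjoint from E, maximal with this property. -/
def IsCompExt (E : Set ℝ) (a b : ℝ) : Prop :=
  0 ≤ a ∧ a < b ∧ Set.Ioo a b ∩ E = ∅ ∧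
  ∀ c d : ℝ, 0 ≤ c → Set.Ioo a b ⊆ Set.Ioo c d → (c, d) ≠ (a, b) → Set.Ioo c d ∩ E ≠ ∅

/-- Membership in Ĩ_E. -/
def memIE (E : Set ℝ) (A : ℕ → ℝ × ℝ) : Prop :=
  (∀ n, 0 < (A n).1) ∧ (∀ n, IsCompExt E (A n).1 (A n).2) ∧
  Filter.Tendsto (fun n => (A n).1) Filter.atTop (nhds 0) ∧
  Filter.Tendsto (fun n => ((A n).2 - (A n).1) / (A n).2) Filter.atTop (nhds 1)

/-- Almost decreasing sequence: eventually nonincreasing. -/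
def AlmostDecr (τ : ℕ → ℝ) : Prop := ∀ᶠ n in Filter.atTop, τ (n + 1) ≤ τ n

/-- Membership in Ẽ₀^d: almost decreasing sequences in E∖{0} tending to 0. -/
def memE0d (E : Set ℝ) (τ : ℕ → ℝ) : Prop :=
  AlmostDecr τ ∧ Filter.Tendsto τ Filter.atTop (nhds 0) ∧ ∀ n, τ n ∈ E \ {0}

/-- Weak equivalence ≍ of sequences: c₁ aₙ ≤ γₙ ≤ c₂ aₙ for large n. -/
def SeqEquiv (a γ : ℕ → ℝ) : Prop :=
  ∃ c₁ c₂ : ℝ, 0 < c₁ ∧ 0 < c₂ ∧ ∀ᶠ n in Filter.atTop, c₁ * a n ≤ γ n ∧ γ n ≤ c₂ * a n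

/-- E is τ̃-strongly porous. -/
def StronglyPorousWrt (E : Set ℝ) (τ : ℕ → ℝ) : Prop :=
  ∃ A : ℕ → ℝ × ℝ, memIE E A ∧ SeqEquiv (fun n => (A n).1) τ

/-- E is completely strongly porous at 0. -/
def CSP (E : Set ℝ) : Prop := ∀ τ : ℕ → ℝ, memE0d E τ → StronglyPorousWrt E τ

/-- Membership in Ĩ_E^d: first coordinates almost decreasing. -/
def memIEd (E : Set ℝ) (A : ℕ → ℝ × ℝ) : Prop := memIE E A ∧ AlmostDecr (fun n => (A n).1)

/-- Membership in Ĩ_E^{sd}: first coordinates eventually strictly decreasing. -/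
def memIEsd (E : Set ℝ) (A : ℕ → ℝ × ℝ) : Prop :=
  memIE E A ∧ ∀ᶠ n in Filter.atTop, (A (n + 1)).1 < (A n).1

/-- The preorder Ã ⪯ L̃. -/
def Prec (A L : ℕ → ℝ × ℝ) : Prop :=
  ∃ N₁ : ℕ, ∃ f : ℕ → ℕ, ∀ n ≥ N₁, (A n).1 = (L (f n)).1

/-- L̃ is universal: every Ã ∈ Ĩ_E^d satisfies Ã ⪯ L̃. -/
def Universal (E : Set ℝ) (L : ℕ → ℝ × ℝ) : Prop :=
  ∀ A : ℕ → ℝ × ℝ, memIEd E A → Prec A L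

/-- M(L̃) = limsup lₙ/mₙ₊₁ (in [0,∞]). -/
noncomputable def Mq (L : ℕ → ℝ × ℝ) : ℝ≥0∞ :=
  Filter.limsup (fun n => ENNReal.ofReal ((L n).1 / (L (n + 1)).2)) Filter.atTop

/-- C(τ̃) = inf over {(aₙ,bₙ)} ∈ Ĩ_E with τₙ ≤ aₙ eventually of limsup aₙ/τₙ. -/
noncomputable def Cseq (E : Set ℝ) (τ : ℕ → ℝ) : ℝ≥0∞ :=
  ⨅ (A : ℕ → ℝ × ℝ) (_ : memIE E A ∧ ∀ᶠ n in Filter.atTop, τ n ≤ (A n).1),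
    Filter.limsup (fun n => ENNReal.ofReal ((A n).1 / τ n)) Filter.atTop

/-- C_E = sup over τ̃ ∈ Ẽ₀^d of C(τ̃). -/
noncomputable def CE (E : Set ℝ) : ℝ≥0∞ := ⨆ (τ : ℕ → ℝ) (_ : memE0d E τ), Cseq E τ

/-- E is uniformly strongly porous at 0. -/
def USP (E : Set ℝ) : Prop :=
  ∃ c : ℝ, 0 < c ∧ ∀ τ : ℕ → ℝ, memE0d E τ → ∃ A : ℕ → ℝ × ℝ, memIE E A ∧
    (∀ᶠ n in Filter.atTop, τ n ≤ (A n).1) ∧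
    Filter.limsup (fun n => ENNReal.ofReal ((A n).1 / τ n)) Filter.atTop ≤ ENNReal.ofReal c


/-!
If the condition fails, then for every `c` gaps `(a, b)` of `E` with `c < b / a ≤ K` occur
arbitrarily close to `0`. Choosing such gaps with `c = n + 2`, decreasing to `0` and avoiding the
first left endpoints of a candidate `L`, gives an element of `Ĩ_E^d`; a left endpoint it shares with
`L` determines the same component, whose ratio is eventually `> K`, so `L` is not universal.

Conversely, the left endpoints `a < 1` of gaps with `b / a > c` form a `c`-separated set
(components are disjoint), and strong porosity supplies them arbitrarily close to `0`. Listing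
them decreasingly gives `L`; the condition forces its ratios to tend to infinity, and every element
of `Ĩ_E` eventually has ratios `> c`, so its left endpoints eventually lie in this list.
-/

namespace IsCompExt

variable {E : Set ℝ} {a b : ℝ}

theorem pos (hacc : AccZero E) (h : IsCompExt E a b) : 0 < a := by
  refine h.1.lt_of_ne fun ha => ?_
  obtain ⟨x, hxE, hx0, hxb⟩ := hacc b (ha ▸ h.2.1)
  exact (h.2.2.1 ▸ ⟨⟨ha ▸ hx0, hxb⟩, hxE⟩ : x ∈ (∅ : Set ℝ))

theorem right_unique {b' : ℝ} (h : IsCompExt E a b) (h' : IsCompExt E a b') : b = b' := by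
  by_contra hne
  rcases lt_or_gt_of_ne hne with hlt | hlt
  · exact h.2.2.2 a b' h.1 (Ioo_subset_Ioo_right hlt.le) (by simp [Ne.symm hne]) h'.2.2.1
  · exact h'.2.2.2 a b h'.1 (Ioo_subset_Ioo_right hlt.le) (by simp [hne]) h.2.2.1

/-- Overlapping components would merge into a larger gap. -/
theorem le_of_lt {a' b' : ℝ} (h : IsCompExt E a b) (h' : IsCompExt E a' b') (haa' : a < a') :
    b ≤ a' := by
  by_contra! hba'
  refine h'.2.2.2 a (max b b') h.1 (Ioo_subset_Ioo haa'.le (le_max_right _ _))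
    (by simp [haa'.ne]) ?_
  rw [eq_empty_iff_forall_notMem]
  rintro x ⟨⟨hax, hxmax⟩, hxE⟩
  rcases lt_or_ge x b with hxb | hbx
  · exact (h.2.2.1 ▸ ⟨⟨hax, hxb⟩, hxE⟩ : x ∈ (∅ : Set ℝ))
  · have hxb' : x < b' := (lt_max_iff.1 hxmax).resolve_left hbx.not_gt
    exact (h'.2.2.1 ▸ ⟨⟨hba'.trans_le hbx, hxb'⟩, hxE⟩ : x ∈ (∅ : Set ℝ))

end IsCompExt

theorem isCompExt_of_forall_exists_mem {E : Set ℝ} {a b : ℝ} (ha : 0 ≤ a) (hab : a < b)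
    (hgap : Ioo a b ∩ E = ∅) (hleft : ∀ c < a, ∃ e ∈ E, c < e ∧ e ≤ a)
    (hright : ∀ d > b, ∃ e ∈ E, b ≤ e ∧ e < d) : IsCompExt E a b := by
  refine ⟨ha, hab, hgap, fun c d _ hsub hne => ?_⟩
  obtain ⟨hca, hbd⟩ := (Ioo_subset_Ioo_iff hab).1 hsub
  rcases hca.lt_or_eq with hca | rfl
  · obtain ⟨e, heE, hce, hea⟩ := hleft c hca
    exact Nonempty.ne_empty ⟨e, ⟨hce, hea.trans_lt (hab.trans_le hbd)⟩, heE⟩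
  · rcases hbd.lt_or_eq with hbd | rfl
    · obtain ⟨e, heE, hbe, hed⟩ := hright d hbd
      exact Nonempty.ne_empty ⟨e, ⟨hab.trans_le hbe, hed⟩, heE⟩
    · exact absurd rfl hne

section Gaps

variable {E : Set ℝ}

theorem exists_isCompExt_of_gap (hacc : AccZero E) {α β : ℝ} (hα : 0 < α) (hαβ : α < β)
    (hgap : Ioo α β ∩ E = ∅) (hβ : ∃ e ∈ E, β ≤ e) :
    ∃ a b, IsCompExt E a b ∧ a ≤ α ∧ β ≤ b := by
  obtain ⟨x₀, hx₀E, hx₀, hx₀α⟩ := hacc α hα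
  have hL : (E ∩ Iic α).Nonempty := ⟨x₀, hx₀E, hx₀α.le⟩
  have hLbdd : BddAbove (E ∩ Iic α) := ⟨α, fun _ hx => hx.2⟩
  have hR : (E ∩ Ici β).Nonempty := let ⟨e, heE, hβe⟩ := hβ; ⟨e, heE, hβe⟩
  have hRbdd : BddBelow (E ∩ Ici β) := ⟨β, fun _ hx => hx.2⟩
  have haα : sSup (E ∩ Iic α) ≤ α := csSup_le hL fun _ hx => hx.2
  have hβb : β ≤ sInf (E ∩ Ici β) := le_csInf hR fun _ hx => hx.2
  have ha : 0 < sSup (E ∩ Iic α) := hx₀.trans_le (le_csSup hLbdd ⟨hx₀E, hx₀α.le⟩)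
  refine ⟨_, _, isCompExt_of_forall_exists_mem ha.le (haα.trans_lt (hαβ.trans_le hβb)) ?_ ?_ ?_,
    haα, hβb⟩
  · rw [eq_empty_iff_forall_notMem]
    rintro x ⟨⟨hax, hxb⟩, hxE⟩
    rcases le_or_gt x α with hxα | hαx
    · exact hax.not_ge (le_csSup hLbdd ⟨hxE, hxα⟩)
    rcases le_or_gt β x with hβx | hxβ
    · exact hxb.not_ge (csInf_le hRbdd ⟨hxE, hβx⟩)
    exact (hgap ▸ ⟨⟨hαx, hxβ⟩, hxE⟩ : x ∈ (∅ : Set ℝ))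
  · intro c hc
    obtain ⟨e, he, hce⟩ := exists_lt_of_lt_csSup hL hc
    exact ⟨e, he.1, hce, le_csSup hLbdd he⟩
  · intro d hd
    obtain ⟨e, he, hed⟩ := exists_lt_of_csInf_lt hR hd
    exact ⟨e, he.1, csInf_le hRbdd he, hed⟩

theorem zero_mem_lambda0_set {h : ℝ} (hh : 0 ≤ h) :
    0 ∈ {l : ℝ | ∃ a b : ℝ, 0 ≤ a ∧ a ≤ b ∧ b ≤ h ∧ Ioo a b ∩ E = ∅ ∧ l = b - a} :=
  ⟨0, 0, le_rfl, le_rfl, hh, by simp, by ring⟩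

theorem lambda0_nonneg {h : ℝ} (hh : 0 ≤ h) : 0 ≤ lambda0 E h :=
  le_csSup ⟨h, by rintro _ ⟨a, b, ha, -, hbh, -, rfl⟩; linarith⟩ (zero_mem_lambda0_set hh)

theorem frequently_lt_lambda0 (hpor : porosity E = 1) {r : ℝ} (hr : r < 1) :
    ∃ᶠ h in 𝓝[>] 0, r * h < lambda0 E h := by
  have hcobdd : IsCoboundedUnder (· ≤ ·) (𝓝[>] (0 : ℝ)) fun h => lambda0 E h / h :=
    isCoboundedUnder_le_of_eventually_le _ <| eventually_nhdsWithin_of_forall fun h hh =>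
      div_nonneg (lambda0_nonneg (le_of_lt hh)) (le_of_lt hh)
  refine ((frequently_lt_of_lt_limsup hcobdd (hpor ▸ hr : r < porosity E)).and_eventually
    self_mem_nhdsWithin).mono fun h ⟨hlt, hh⟩ => ?_
  exact (lt_div_iff₀ hh).1 hlt

/-- A gap of length `> R h / (R + 1)` inside `(0, h)` starts before `q = h / (R + 1)` and ends
after `R q`. -/
theorem frequently_isCompExt_lt_div (hpor : porosity E = 1) (hacc : AccZero E) {R : ℝ}
    (hR : 0 < R) : ∃ᶠ a in 𝓝[>] 0, ∃ b, IsCompExt E a b ∧ R < b / a := by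
  obtain ⟨e, heE, he, -⟩ := hacc 1 one_pos
  rw [(nhdsGT_basis (0 : ℝ)).frequently_iff]
  intro t ht
  have hr : R / (R + 1) < 1 := by rw [div_lt_one (by positivity)]; linarith
  obtain ⟨h, hlam, hh, hht⟩ := ((frequently_lt_lambda0 hpor hr).and_eventually
    (Ioo_mem_nhdsGT (lt_min ht he))).exists
  obtain ⟨_, ⟨α, β, hα, -, hβh, hgap, rfl⟩, hlt⟩ :=
    exists_lt_of_lt_csSup ⟨0, zero_mem_lambda0_set hh.le⟩ hlam
  set q := h / (R + 1)
  have hhq : h = (R + 1) * q := (mul_div_cancel₀ h (by positivity)).symm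
  have hrq : R / (R + 1) * h = R * q := by ring
  have hαq : α < q := by linarith
  have hβ : R * q < β := by linarith
  have hα : 0 < α := by
    refine hα.lt_of_ne fun hα0 => ?_
    obtain ⟨x, hxE, hx, hxβ⟩ := hacc β (by nlinarith)
    exact (hgap ▸ ⟨⟨hα0 ▸ hx, hxβ⟩, hxE⟩ : x ∈ (∅ : Set ℝ))
  obtain ⟨a, b, hab, haα, hβb⟩ := exists_isCompExt_of_gap hacc hα (by nlinarith) hgap
    ⟨e, heE, hβh.trans (hht.le.trans (min_le_right _ _))⟩
  have ha := hab.pos hacc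
  refine ⟨a, ⟨ha, ?_⟩, b, hab, (lt_div_iff₀ ha).2 ?_⟩
  · calc a ≤ α := haα
      _ < q := hαq
      _ ≤ h := by nlinarith
      _ < t := hht.trans_le (min_le_left _ _)
  · calc R * a ≤ R * α := by gcongr
      _ < R * q := by gcongr
      _ < b := hβ.trans_le hβb

end Gaps

theorem tendsto_sub_div_nhds_one_iff {ι : Type*} {l : Filter ι} {a b : ι → ℝ}
    (ha : ∀ i, 0 < a i) (hb : ∀ i, 0 < b i) :
    Tendsto (fun i => (b i - a i) / b i) l (𝓝 1) ↔ Tendsto (fun i => b i / a i) l atTop := by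
  have hinv : ∀ i, (b i / a i)⁻¹ = 1 - (b i - a i) / b i := fun i => by
    field_simp [(ha i).ne', (hb i).ne']; ring
  have hpos : ∀ i, 0 < (b i / a i)⁻¹ := fun i => inv_pos.2 (div_pos (hb i) (ha i))
  constructor
  · intro h
    have h0 : Tendsto (fun i => (b i / a i)⁻¹) l (𝓝[>] 0) := by
      refine tendsto_nhdsWithin_iff.2 ⟨?_, Eventually.of_forall hpos⟩
      simpa [hinv] using h.const_sub 1
    simpa only [Pi.inv_def, inv_inv] using h0.inv_tendsto_nhdsGT_zero
  · intro h
    have h0 := (tendsto_inv_atTop_nhdsGT_zero.comp h).mono_right nhdsWithin_le_nhds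
    simpa [Function.comp_def, hinv] using h0.const_sub 1

theorem memIE_iff {E : Set ℝ} {A : ℕ → ℝ × ℝ} :
    memIE E A ↔ (∀ n, 0 < (A n).1) ∧ (∀ n, IsCompExt E (A n).1 (A n).2) ∧
      Tendsto (fun n => (A n).1) atTop (𝓝 0) ∧
      Tendsto (fun n => (A n).2 / (A n).1) atTop atTop := by
  have hb (hpos : ∀ n, 0 < (A n).1) (hcomp : ∀ n, IsCompExt E (A n).1 (A n).2) (n : ℕ) :
      0 < (A n).2 := (hpos n).trans (hcomp n).2.1
  constructor
  · rintro ⟨hpos, hcomp, hzero, hrat⟩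
    exact ⟨hpos, hcomp, hzero, (tendsto_sub_div_nhds_one_iff hpos (hb hpos hcomp)).1 hrat⟩
  · rintro ⟨hpos, hcomp, hzero, hrat⟩
    exact ⟨hpos, hcomp, hzero, (tendsto_sub_div_nhds_one_iff hpos (hb hpos hcomp)).2 hrat⟩

theorem prec_of_eventually_mem_range {A L : ℕ → ℝ × ℝ}
    (h : ∀ᶠ n in atTop, (A n).1 ∈ range fun k => (L k).1) : Prec A L := by
  classical
  obtain ⟨N, hN⟩ := eventually_atTop.1 h
  refine ⟨N, fun n => if hn : N ≤ n then (hN n hn).choose else 0, fun n hn => ?_⟩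
  simpa [hn] using (hN n hn).choose_spec.symm

theorem exists_strictAnti_tendsto_of_frequently {p : ℕ → ℝ → Prop}
    (h : ∀ n, ∃ᶠ x in 𝓝[>] 0, p n x) :
    ∃ a : ℕ → ℝ, StrictAnti a ∧ (∀ n, 0 < a n) ∧ Tendsto a atTop (𝓝 0) ∧ ∀ n, p n (a n) := by
  have hstep : ∀ (n : ℕ) (u : Ioi (0 : ℝ)), ∃ x : Ioi (0 : ℝ),
      p n x ∧ (x : ℝ) < u ∧ (x : ℝ) < 1 / (n + 1) := by
    intro n u
    obtain ⟨x, hx, hx0, hxu⟩ := ((h n).and_eventually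
      (Ioo_mem_nhdsGT (lt_min u.2 (by positivity : (0 : ℝ) < 1 / (n + 1))))).exists
    exact ⟨⟨x, hx0⟩, hx, hxu.trans_le (min_le_left _ _), hxu.trans_le (min_le_right _ _)⟩
  choose g hg using hstep
  let a : ℕ → Ioi (0 : ℝ) := fun n =>
    Nat.rec (g 0 ⟨1, mem_Ioi.2 one_pos⟩) (fun k x => g (k + 1) x) n
  have ha : ∀ n, p n (a n).1 ∧ (a n).1 < 1 / (n + 1) := by
    rintro (_ | n)
    · exact ⟨(hg _ _).1, (hg _ _).2.2⟩
    · exact ⟨(hg _ _).1, by simpa using (hg (n + 1) (a n)).2.2⟩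
  refine ⟨fun n => (a n).1, strictAnti_nat_of_succ_lt fun n => (hg (n + 1) (a n)).2.1,
    fun n => (a n).2, ?_, fun n => (ha n).1⟩
  exact tendsto_of_tendsto_of_tendsto_of_le_of_le tendsto_const_nhds
    tendsto_one_div_add_atTop_nhds_zero_nat (fun n => (a n).2.le) fun n => (ha n).2.le

section Separated

variable {c : ℝ}

theorem exists_isGreatest_of_separated {T : Set ℝ} (hc : 1 < c) (hpos : ∀ x ∈ T, 0 < x)
    (hsep : ∀ x ∈ T, ∀ y ∈ T, x < y → c * x < y) (hne : T.Nonempty) (hbdd : BddAbove T) :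
    ∃ s, IsGreatest T s := by
  obtain ⟨x₀, hx₀⟩ := hne
  have hsup : 0 < sSup T := (hpos x₀ hx₀).trans_le (le_csSup hbdd hx₀)
  obtain ⟨s, hs, hlt⟩ := exists_lt_of_lt_csSup ⟨x₀, hx₀⟩ (div_lt_self hsup hc)
  refine ⟨s, hs, fun x hx => not_lt.1 fun hsx => ?_⟩
  have := hsep s hs x hx hsx
  have := le_csSup hbdd hx
  rw [div_lt_iff₀ (by linarith)] at hlt
  linarith

/-- List `S` from its maximum down, each time taking the largest element below the previous one;
separation makes these exist and decay geometrically. -/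
theorem exists_strictAnti_range_eq_of_separated {S : Set ℝ} (hc : 1 < c)
    (hpos : ∀ x ∈ S, 0 < x) (hsep : ∀ x ∈ S, ∀ y ∈ S, x < y → c * x < y) (hbdd : BddAbove S)
    (hS : ∃ᶠ x in 𝓝[>] 0, x ∈ S) :
    ∃ a : ℕ → ℝ, StrictAnti a ∧ Tendsto a atTop (𝓝 0) ∧ range a = S := by
  have hgreatest : ∀ T ⊆ S, T.Nonempty → ∃ s, IsGreatest T s := fun T hT hne =>
    exists_isGreatest_of_separated hc (fun x hx => hpos x (hT hx))
      (fun x hx y hy => hsep x (hT hx) y (hT hy)) hne (hbdd.mono hT)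
  have hbelow : ∀ u : S, ∃ s : S, IsGreatest (S ∩ Iio u) s := fun u => by
    obtain ⟨x, hxS, -, hxu⟩ := (hS.and_eventually (Ioo_mem_nhdsGT (hpos u u.2))).exists
    obtain ⟨s, hs⟩ := hgreatest (S ∩ Iio u) inter_subset_left ⟨x, hxS, hxu⟩
    exact ⟨⟨s, hs.1.1⟩, hs⟩
  obtain ⟨s₀, hs₀⟩ := hgreatest S subset_rfl hS.exists
  choose g hg using hbelow
  let x : ℕ → S := fun n => Nat.rec ⟨s₀, hs₀.1⟩ (fun _ y => g y) n
  have hsucc : ∀ n, (x (n + 1)).1 < (x n).1 := fun n => (hg (x n)).1.2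
  have hzero : Tendsto (fun n => (x n).1) atTop (𝓝 0) := by
    have hinv : Tendsto (fun n => (x n).1⁻¹) atTop atTop := by
      refine tendsto_atTop_of_geom_le (inv_pos.2 (hpos _ (x 0).2)) hc fun n => ?_
      have h₁ := hpos _ (x (n + 1)).2
      have h₂ := hsep _ (x (n + 1)).2 _ (x n).2 (hsucc n)
      rw [← div_eq_mul_inv, div_le_iff₀ (hpos _ (x n).2)]
      calc c = (x (n + 1)).1⁻¹ * (c * (x (n + 1)).1) := by field_simp
        _ ≤ (x (n + 1)).1⁻¹ * (x n).1 := by gcongr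
    simpa only [Pi.inv_def, inv_inv] using hinv.inv_tendsto_atTop
  refine ⟨fun n => (x n).1, strictAnti_nat_of_succ_lt hsucc, hzero, ?_⟩
  refine Subset.antisymm (range_subset_iff.2 fun n => (x n).2) fun s hs => ?_
  classical
  have hex : ∃ n, (x n).1 ≤ s :=
    (hzero.eventually (gt_mem_nhds (hpos s hs))).exists.imp fun _ => le_of_lt
  refine ⟨Nat.find hex, le_antisymm (Nat.find_spec hex) ?_⟩
  rcases h : Nat.find hex with _ | m
  · exact hs₀.2 hs
  · have hms : s < (x m).1 := not_le.1 (Nat.find_min hex (h ▸ m.lt_succ_self))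
    exact (hg (x m)).2 ⟨hs, hms⟩

end Separated

section Universal

variable {E : Set ℝ}

theorem not_universal_of_forall_exists_bounded_div (hacc : AccZero E)
    (H : ∀ c : ℝ, 1 < c → ∃ K : ℝ, 1 < K ∧ ∀ t : ℝ, 0 < t →
      ∃ a b : ℝ, IsCompExt E a b ∧ a < t ∧ c < b / a ∧ b / a ≤ K)
    {L : ℕ → ℝ × ℝ} (hL : memIE E L) : ¬ Universal E L := by
  intro hLuniv
  obtain ⟨hLpos, hLcomp, -, hLratio⟩ := memIE_iff.1 hL
  choose K hK using fun n : ℕ =>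
    (H (n + 2) (by linarith [n.cast_nonneg (α := ℝ)])).imp fun _ h => h.2
  choose N hN using fun n => eventually_atTop.1 (hLratio.eventually_gt_atTop (K n))
  have hfreq : ∀ n : ℕ, ∃ᶠ x in 𝓝[>] 0, (∃ b, IsCompExt E x b ∧ (n : ℝ) + 2 < b / x ∧ b / x ≤ K n)
      ∧ ∀ k ∈ Iio (N n), x < (L k).1 := by
    intro n
    refine Frequently.and_eventually ?_ <| (eventually_all_finite (finite_Iio _)).2 fun k _ =>
      nhdsWithin_le_nhds (eventually_lt_nhds (hLpos k))
    rw [(nhdsGT_basis 0).frequently_iff]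
    intro t ht
    obtain ⟨a, b, hab, hat, hlt, hle⟩ := hK n t ht
    exact ⟨a, ⟨hab.pos hacc, hat⟩, b, hab, hlt, hle⟩
  obtain ⟨a, ha_anti, ha_pos, ha_zero, ha⟩ := exists_strictAnti_tendsto_of_frequently hfreq
  choose b hb using fun n => (ha n).1
  have hA : memIEd E fun n => (a n, b n) := by
    refine ⟨memIE_iff.2 ⟨ha_pos, fun n => (hb n).1, ha_zero, ?_⟩,
      Eventually.of_forall fun n => ha_anti.antitone n.le_succ⟩
    exact tendsto_atTop_mono (fun n => (hb n).2.1.le)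
      (tendsto_atTop_add_const_right _ _ tendsto_natCast_atTop_atTop)
  obtain ⟨N₁, f, hf⟩ := hLuniv _ hA
  have haL : a N₁ = (L (f N₁)).1 := hf N₁ le_rfl
  rcases lt_or_ge (f N₁) (N N₁) with hlt | hge
  · exact ((ha N₁).2 _ hlt).ne haL
  · have hbL : b N₁ = (L (f N₁)).2 := (hb N₁).1.right_unique (haL ▸ hLcomp (f N₁))
    have hK_lt := hN N₁ _ hge
    rw [← haL, ← hbL] at hK_lt
    exact (hb N₁).2.2.not_gt hK_lt

theorem exists_universal_of_forall_lt_div (hpor : porosity E = 1) (hacc : AccZero E) {c : ℝ}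
    (hc : 1 < c) (hcK : ∀ K : ℝ, 1 < K → ∃ t : ℝ, 0 < t ∧
      ∀ a b : ℝ, IsCompExt E a b → a < t → c < b / a → K < b / a) :
    ∃ L : ℕ → ℝ × ℝ, memIEd E L ∧ Universal E L := by
  set S := {x : ℝ | x < 1 ∧ ∃ y, IsCompExt E x y ∧ c < y / x}
  have hpos : ∀ x ∈ S, 0 < x := fun x ⟨_, _, hxy, _⟩ => hxy.pos hacc
  have hsep : ∀ x ∈ S, ∀ x' ∈ S, x < x' → c * x < x' := by
    rintro x ⟨-, y, hxy, hcy⟩ x' ⟨-, y', hxy', -⟩ hlt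
    have := hxy.le_of_lt hxy' hlt
    rw [lt_div_iff₀ (hxy.pos hacc)] at hcy
    linarith
  have hS : ∃ᶠ x in 𝓝[>] 0, x ∈ S :=
    ((frequently_isCompExt_lt_div hpor hacc (by linarith : (0 : ℝ) < c)).and_eventually
      (Ioo_mem_nhdsGT one_pos)).mono fun x ⟨h, hx⟩ => ⟨hx.2, h⟩
  obtain ⟨a, ha_anti, ha_zero, ha_range⟩ :=
    exists_strictAnti_range_eq_of_separated hc hpos hsep ⟨1, fun x hx => hx.1.le⟩ hS
  have haS : ∀ n, a n ∈ S := fun n => ha_range ▸ mem_range_self n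
  choose b hb using fun n => (haS n).2
  refine ⟨fun n => (a n, b n), ⟨memIE_iff.2 ⟨fun n => hpos _ (haS n), fun n => (hb n).1, ha_zero,
    ?_⟩, Eventually.of_forall fun n => ha_anti.antitone n.le_succ⟩, fun A hA => ?_⟩
  · refine tendsto_atTop.2 fun K => ?_
    obtain ⟨t, ht, htK⟩ := hcK (max K 2) (lt_max_of_lt_right one_lt_two)
    filter_upwards [ha_zero.eventually (gt_mem_nhds ht)] with n hn
    exact (le_max_left _ _).trans (htK _ _ (hb n).1 hn (hb n).2).le
  · obtain ⟨-, hAcomp, hAzero, hAratio⟩ := memIE_iff.1 hA.1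
    refine prec_of_eventually_mem_range ?_
    filter_upwards [hAzero.eventually (gt_mem_nhds one_pos), hAratio.eventually_gt_atTop c]
      with n h1 h2
    change (A n).1 ∈ range a
    exact ha_range ▸ ⟨h1, (A n).2, hAcomp n, h2⟩

end Universal

theorem stmt13_general (E : Set ℝ) (hpor : porosity E = 1)
    (hacc : AccZero E) :
    (∃ L : ℕ → ℝ × ℝ, memIEd E L ∧ Universal E L) ↔
      ∃ c : ℝ, 1 < c ∧ ∀ K : ℝ, 1 < K → ∃ t : ℝ, 0 < t ∧
        ∀ a b : ℝ, IsCompExt E a b → a < t → c < b / a → K < b / a := by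
  refine ⟨fun ⟨L, hL, hLuniv⟩ => ?_, fun ⟨c, hc, hcK⟩ =>
    exists_universal_of_forall_lt_div hpor hacc hc hcK⟩
  by_contra H
  push Not at H
  exact not_universal_of_forall_exists_bounded_div hacc H hL.1 hLuniv

theorem stmt13 (E : Set ℝ) (hE : E ⊆ Set.Ici 0) (hpor : porosity E = 1)
    (hacc : AccZero E) :
    (∃ L : ℕ → ℝ × ℝ, memIEd E L ∧ Universal E L) ↔
      ∃ c : ℝ, 1 < c ∧ ∀ K : ℝ, 1 < K → ∃ t : ℝ, 0 < t ∧
        ∀ a b : ℝ, IsCompExt E a b → a < t → c < b / a → K < b / a :=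
  stmt13_general E hpor hacc
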